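/- arXiv:1804.07397 — 2 statements merged into one kernel-verified Lean document; each statement's English description precedes it below -/
import Mathlib

section
/- For an odd prime p, the fourth power moment of Kloosterman sums satisfies ∑_{u=1}^{p-1} K_u^4 = 2p^3 - 3p^2 - 3p - 1. -/
open Finset

noncomputable def ep (p : ℕ) [NeZero p] (z : ZMod p) : ℂ :=
  Complex.exp (2 * Real.pi * Complex.I * (z.val : ℂ) / (p : ℂ))

/-- Kloosterman sum `K_u = ∑_{x ∈ (Z/p)ˣ} e_p(x + u x⁻¹)`. -/
noncomputable def K (p : ℕ) [NeZero p] (u : ℤ) : ℂ :=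
  ∑ x : (ZMod p)ˣ, ep p ((x : ZMod p) + (u : ZMod p) * ((x⁻¹ : (ZMod p)ˣ) : ZMod p))

lemma ep_eq_stdAddChar (p : ℕ) [NeZero p] (z : ZMod p) :
    ep p z = ZMod.stdAddChar z := by
  rw [ZMod.stdAddChar_apply, ZMod.toCircle_apply]
  push_cast [ep]
  ring_nf

variable {p : ℕ} [hp : Fact p.Prime]

variable {p : ℕ} [hp : Fact p.Prime]

lemma std_ne_one : (ZMod.stdAddChar (N := p)) ≠ 1 := by
  have h := ZMod.isPrimitive_stdAddChar p (a := 1) one_ne_zero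
  rwa [AddChar.mulShift_one] at h

lemma sum_std (t : ZMod p) :
    ∑ u : ZMod p, ZMod.stdAddChar (u * t) = if t = 0 then (p : ℂ) else 0 := by
  split_ifs with h
  · simp [h, ZMod.card p]
  · have h1 : AddChar.mulShift (ZMod.stdAddChar (N := p)) t ≠ 1 :=
      ZMod.isPrimitive_stdAddChar p h
    have := AddChar.sum_eq_zero_of_ne_one h1
    simpa [AddChar.mulShift_apply, mul_comm] using this

lemma sum_units_eq (f : ZMod p → ℂ) :
    ∑ x : (ZMod p)ˣ, f x = ∑ z ∈ Finset.univ.erase (0 : ZMod p), f z := by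
  refine Finset.sum_nbij' (fun x => (x : ZMod p))
    (fun z => if hz : z = 0 then 1 else Units.mk0 z hz) ?_ ?_ ?_ ?_ ?_
  · intro x _; exact Finset.mem_erase.2 ⟨x.ne_zero, Finset.mem_univ _⟩
  · intro z _; exact Finset.mem_univ _
  · intro x _; simp [Units.ne_zero x]
  · intro z hz; simp [Finset.mem_erase.1 hz |>.1]
  · intro x _; rfl

lemma ind_sum (z : ZMod p) :
    ∑ d : (ZMod p)ˣ, (if (d : ZMod p) = z then (1 : ℂ) else 0) =
      if z = 0 then 0 else 1 := by
  split_ifs with h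
  · subst h; simp [Units.ne_zero]
  · rw [Finset.sum_eq_single (Units.mk0 z h)]
    · simp
    · intro b _ hb
      simp only [ite_eq_right_iff]
      intro hbz
      exact absurd (Units.ext hbz) hb
    · simp

lemma card_G (z : ℂ) : ∑ _x : (ZMod p)ˣ, z = ((p : ℂ) - 1) * z := by
  rw [Finset.sum_const, Finset.card_univ, ZMod.card_units, nsmul_eq_mul,
    Nat.cast_sub hp.out.one_le, Nat.cast_one]

lemma step_sum (s : ZMod p) :
    ∑ d : (ZMod p)ˣ, (if s + (d : ZMod p) = 0 then (1 : ℂ) else 0) =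
      1 - (if s = 0 then 1 else 0) := by
  have h : ∀ d : (ZMod p)ˣ, (s + (d : ZMod p) = 0) ↔ ((d : ZMod p) = -s) := by
    intro d; rw [add_comm, add_eq_zero_iff_eq_neg]
  simp_rw [h]
  rw [ind_sum]
  by_cases hs : s = 0 <;> simp [hs]

lemma count2 :
    ∑ a : (ZMod p)ˣ, ∑ b : (ZMod p)ˣ, (if (a : ZMod p) + b = 0 then (1:ℂ) else 0)
      = (p : ℂ) - 1 := by
  simp only [step_sum, Finset.sum_sub_distrib, card_G]
  simp only [Units.ne_zero, if_false, Finset.sum_sub_distrib, card_G]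
  ring

lemma count3 :
    ∑ a : (ZMod p)ˣ, ∑ b : (ZMod p)ˣ, ∑ c : (ZMod p)ˣ,
      (if (a : ZMod p) + b + c = 0 then (1:ℂ) else 0)
      = ((p : ℂ) - 1)^2 - ((p:ℂ) - 1) := by
  simp only [step_sum, Finset.sum_sub_distrib, card_G]
  simp only [Units.ne_zero, if_false, Finset.sum_sub_distrib, card_G]
  ring

lemma count4 :
    ∑ a : (ZMod p)ˣ, ∑ b : (ZMod p)ˣ, ∑ c : (ZMod p)ˣ, ∑ d : (ZMod p)ˣ,
      (if (a : ZMod p) + b + c + d = 0 then (1:ℂ) else 0)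
      = ((p : ℂ) - 1)^3 - ((p:ℂ) - 1)^2 + ((p:ℂ) - 1) := by
  simp only [step_sum, Finset.sum_sub_distrib, card_G]
  simp only [Units.ne_zero, if_false, Finset.sum_sub_distrib, card_G]
  ring

lemma mul_ind (P Q : Prop) [Decidable P] [Decidable Q] :
    (if P ∧ Q then (1:ℂ) else 0) = (if P then (1:ℂ) else 0) * (if Q then (1:ℂ) else 0) := by
  by_cases hP : P <;> by_cases hQ : Q <;> simp [hP, hQ]

/-- characterization of solutions -/
lemma charac (a b c d : (ZMod p)ˣ) :
    ((a : ZMod p) + b + c + d = 0 ∧ ((a:ZMod p))⁻¹ + ((b:ZMod p))⁻¹ + ((c:ZMod p))⁻¹ + ((d:ZMod p))⁻¹ = 0)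
    ↔ (((b : ZMod p) = -(a:ZMod p) ∧ (d:ZMod p) = -(c:ZMod p)) ∨
       ((c : ZMod p) = -(a:ZMod p) ∧ (d:ZMod p) = -(b:ZMod p)) ∨
       ((c : ZMod p) = -(b:ZMod p) ∧ (d:ZMod p) = -(a:ZMod p))) := by
  have ha : (a : ZMod p) ≠ 0 := a.ne_zero
  have hb : (b : ZMod p) ≠ 0 := b.ne_zero
  have hc : (c : ZMod p) ≠ 0 := c.ne_zero
  have hd : (d : ZMod p) ≠ 0 := d.ne_zero
  constructor
  · rintro ⟨hσ, hτ⟩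
    field_simp at hτ
    have key : ((d:ZMod p) + a) * ((d:ZMod p) + b) * ((d:ZMod p) + c) = 0 := by
      linear_combination ((d:ZMod p)^2) * hσ + hτ
    rcases mul_eq_zero.1 key with h | h3
    · rcases mul_eq_zero.1 h with h1 | h2
      · -- d = -a
        right; right
        constructor
        · linear_combination hσ - h1
        · linear_combination h1
      · -- d = -b
        right; left
        constructor
        · linear_combination hσ - h2
        · linear_combination h2
    · -- d = -c
      left
      constructor
      · linear_combination hσ - h3
      · linear_combination h3
  · rintro (⟨h1, h2⟩ | ⟨h1, h2⟩ | ⟨h1, h2⟩) <;>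
      exact ⟨by rw [h1, h2]; ring, by rw [h1, h2, inv_neg, inv_neg]; ring⟩

lemma ie3 (P Q R : Prop) [Decidable P] [Decidable Q] [Decidable R] :
    (if P ∨ Q ∨ R then (1:ℂ) else 0) =
    (if P then (1:ℂ) else 0) + (if Q then (1:ℂ) else 0) + (if R then (1:ℂ) else 0)
    - (if P ∧ Q then (1:ℂ) else 0) - (if P ∧ R then (1:ℂ) else 0)
    - (if Q ∧ R then (1:ℂ) else 0) + (if P ∧ Q ∧ R then (1:ℂ) else 0) := by
  by_cases hP : P <;> by_cases hQ : Q <;> by_cases hR : R <;>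
    simp [hP, hQ, hR] <;> norm_num

lemma pair12 (A B C D : ZMod p) :
    ((B = -A ∧ D = -C) ∧ (C = -A ∧ D = -B)) ↔ (B = -A ∧ C = -A ∧ D = A) := by
  constructor
  · rintro ⟨⟨h1, h2⟩, h3, h4⟩
    exact ⟨h1, h3, by rw [h2, h3, neg_neg]⟩
  · rintro ⟨h1, h2, h3⟩
    exact ⟨⟨h1, by rw [h3, h2, neg_neg]⟩, h2, by rw [h3, h1, neg_neg]⟩

lemma pair13 (A B C D : ZMod p) :
    ((B = -A ∧ D = -C) ∧ (C = -B ∧ D = -A)) ↔ (B = -A ∧ C = A ∧ D = -A) := by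
  constructor
  · rintro ⟨⟨h1, h2⟩, h3, h4⟩
    exact ⟨h1, by rw [h3, h1, neg_neg], h4⟩
  · rintro ⟨h1, h2, h3⟩
    exact ⟨⟨h1, by rw [h3, h2]⟩, by rw [h2, h1, neg_neg], h3⟩

lemma pair23 (A B C D : ZMod p) :
    ((C = -A ∧ D = -B) ∧ (C = -B ∧ D = -A)) ↔ (B = A ∧ C = -A ∧ D = -A) := by
  constructor
  · rintro ⟨⟨h1, h2⟩, h3, h4⟩
    exact ⟨neg_inj.mp (h3.symm.trans h1), h1, h4⟩
  · rintro ⟨h1, h2, h3⟩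
    exact ⟨⟨h2, by rw [h3, h1]⟩, by rw [h2, h1], h3⟩

lemma two_ne_zero'' (hodd : Odd p) : (2 : ZMod p) ≠ 0 := by
  intro h
  have h2 : ((2 : ℕ) : ZMod p) = 0 := by exact_mod_cast h
  have hdvd : p ∣ 2 := (ZMod.natCast_eq_zero_iff 2 p).1 h2
  have := (Nat.prime_dvd_prime_iff_eq hp.out Nat.prime_two).1 hdvd
  rw [this] at hodd
  norm_num [Nat.odd_iff] at hodd

lemma triple_iff (hodd : Odd p) (a b c d : (ZMod p)ˣ) :
    (((b:ZMod p) = -(a:ZMod p) ∧ (d:ZMod p) = -(c:ZMod p)) ∧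
     ((c:ZMod p) = -(a:ZMod p) ∧ (d:ZMod p) = -(b:ZMod p)) ∧
     ((c:ZMod p) = -(b:ZMod p) ∧ (d:ZMod p) = -(a:ZMod p))) ↔ False := by
  simp only [iff_false]
  rintro ⟨⟨h1, h2⟩, ⟨h3, h4⟩, ⟨h5, h6⟩⟩
  have h7 : (2 : ZMod p) * (a : ZMod p) = 0 := by linear_combination h1 + h3 - h5
  rcases mul_eq_zero.1 h7 with h | h
  · exact two_ne_zero'' hodd h
  · exact a.ne_zero h

lemma countA (hodd : Odd p) :
    ∑ a : (ZMod p)ˣ, ∑ b : (ZMod p)ˣ, ∑ c : (ZMod p)ˣ, ∑ d : (ZMod p)ˣ,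
      (if ((a : ZMod p) + b + c + d = 0 ∧
          ((a:ZMod p))⁻¹ + ((b:ZMod p))⁻¹ + ((c:ZMod p))⁻¹ + ((d:ZMod p))⁻¹ = 0)
        then (1:ℂ) else 0)
    = 3 * ((p:ℂ) - 1)^2 - 3 * ((p:ℂ) - 1) := by
  simp only [charac, ie3]
  simp only [triple_iff hodd]
  simp only [pair12, pair13, pair23]
  simp only [if_false, mul_ind, ← Finset.mul_sum, ind_sum, neg_eq_zero, Units.ne_zero,
    Finset.sum_add_distrib, Finset.sum_sub_distrib, mul_one, mul_zero, zero_mul, one_mul,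
    card_G, add_zero, if_true]
  ring

noncomputable def KK (p : ℕ) [NeZero p] (v : ZMod p) : ℂ :=
  ∑ x : (ZMod p)ˣ, ZMod.stdAddChar ((x : ZMod p) + v * ((x : ZMod p))⁻¹)

lemma K_eq_KK (u : ℤ) : K p u = KK p ((u : ZMod p)) := by
  unfold K KK
  refine Finset.sum_congr rfl fun x _ => ?_
  rw [ep_eq_stdAddChar, Units.val_inv_eq_inv_val]

lemma KK_zero : KK p 0 = -1 := by
  unfold KK
  simp only [zero_mul, add_zero]
  rw [sum_units_eq (fun z => ZMod.stdAddChar z),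
    Finset.sum_erase_eq_sub (Finset.mem_univ (0 : ZMod p)),
    AddChar.sum_eq_zero_of_ne_one std_ne_one, AddChar.map_zero_eq_one]
  ring

lemma KK_pow4 (v : ZMod p) :
    (KK p v) ^ 4 =
      ∑ a : (ZMod p)ˣ, ∑ b : (ZMod p)ˣ, ∑ c : (ZMod p)ˣ, ∑ d : (ZMod p)ˣ,
        ZMod.stdAddChar ((a : ZMod p) + (b : ZMod p) + (c : ZMod p) + (d : ZMod p)) *
          ZMod.stdAddChar (v * (((a:ZMod p))⁻¹ + ((b:ZMod p))⁻¹ + ((c:ZMod p))⁻¹ + ((d:ZMod p))⁻¹)) := by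
  have h4 : (KK p v) ^ 4 = KK p v * (KK p v * (KK p v * KK p v)) := by ring
  rw [h4]
  unfold KK
  simp only [Finset.sum_mul, Finset.mul_sum]
  refine Finset.sum_congr rfl fun a _ => Finset.sum_congr rfl fun b _ =>
    Finset.sum_congr rfl fun c _ => Finset.sum_congr rfl fun d _ => ?_
  simp only [← AddChar.map_add_eq_mul]
  congr 1
  ring

noncomputable def Ssum (p : ℕ) [Fact p.Prime] : ℂ :=
  ∑ a : (ZMod p)ˣ, ∑ b : (ZMod p)ˣ, ∑ c : (ZMod p)ˣ, ∑ d : (ZMod p)ˣ,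
    if ((a:ZMod p))⁻¹ + ((b:ZMod p))⁻¹ + ((c:ZMod p))⁻¹ + ((d:ZMod p))⁻¹ = 0
      then ZMod.stdAddChar ((a : ZMod p) + (b : ZMod p) + (c : ZMod p) + (d : ZMod p)) else 0

lemma ite_sum_const {C : Prop} [Decidable C] (f : (ZMod p)ˣ → ℂ) :
    ∑ l : (ZMod p)ˣ, (if C then f l else 0) = if C then ∑ l : (ZMod p)ˣ, f l else 0 := by
  split_ifs <;> simp

lemma ite_alg (P Q : Prop) [Decidable P] [Decidable Q] (v : ℂ) :
    (if Q then ((if P then v else 0) - 1) else 0) =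
      v * (if P ∧ Q then 1 else 0) - (if Q then 1 else 0) := by
  by_cases hP : P <;> by_cases hQ : Q <;> simp [hP, hQ]

lemma sum_KK4 :
    ∑ v : ZMod p, (KK p v) ^ 4 = (p : ℂ) * Ssum p := by
  simp_rw [KK_pow4]
  rw [Finset.sum_comm]
  have step : ∀ a b c d : (ZMod p)ˣ,
      (∑ v : ZMod p,
        ZMod.stdAddChar ((a : ZMod p) + (b : ZMod p) + (c : ZMod p) + (d : ZMod p)) *
          ZMod.stdAddChar (v * (((a:ZMod p))⁻¹ + ((b:ZMod p))⁻¹ + ((c:ZMod p))⁻¹ + ((d:ZMod p))⁻¹)))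
      = (p:ℂ) * (if ((a:ZMod p))⁻¹ + ((b:ZMod p))⁻¹ + ((c:ZMod p))⁻¹ + ((d:ZMod p))⁻¹ = 0
          then ZMod.stdAddChar ((a : ZMod p) + (b : ZMod p) + (c : ZMod p) + (d : ZMod p)) else 0) := by
    intro a b c d
    rw [← Finset.mul_sum, sum_std]
    split_ifs <;> ring
  calc ∑ a : (ZMod p)ˣ, ∑ v : ZMod p, ∑ b : (ZMod p)ˣ, ∑ c : (ZMod p)ˣ, ∑ d : (ZMod p)ˣ,
        ZMod.stdAddChar ((a : ZMod p) + (b : ZMod p) + (c : ZMod p) + (d : ZMod p)) *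
          ZMod.stdAddChar (v * (((a:ZMod p))⁻¹ + ((b:ZMod p))⁻¹ + ((c:ZMod p))⁻¹ + ((d:ZMod p))⁻¹))
      = ∑ a : (ZMod p)ˣ, ∑ b : (ZMod p)ˣ, ∑ c : (ZMod p)ˣ, ∑ d : (ZMod p)ˣ, ∑ v : ZMod p,
        ZMod.stdAddChar ((a : ZMod p) + (b : ZMod p) + (c : ZMod p) + (d : ZMod p)) *
          ZMod.stdAddChar (v * (((a:ZMod p))⁻¹ + ((b:ZMod p))⁻¹ + ((c:ZMod p))⁻¹ + ((d:ZMod p))⁻¹)) := by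
        refine Finset.sum_congr rfl fun a _ => ?_
        rw [Finset.sum_comm]
        refine Finset.sum_congr rfl fun b _ => ?_
        rw [Finset.sum_comm]
        refine Finset.sum_congr rfl fun c _ => ?_
        rw [Finset.sum_comm]
    _ = (p : ℂ) * Ssum p := by
        simp_rw [step]
        unfold Ssum
        simp_rw [← Finset.mul_sum]

lemma S_scale (l : (ZMod p)ˣ) :
    Ssum p = ∑ a : (ZMod p)ˣ, ∑ b : (ZMod p)ˣ, ∑ c : (ZMod p)ˣ, ∑ d : (ZMod p)ˣ,
      (if ((a:ZMod p))⁻¹ + ((b:ZMod p))⁻¹ + ((c:ZMod p))⁻¹ + ((d:ZMod p))⁻¹ = 0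
        then ZMod.stdAddChar ((l : ZMod p) *
          ((a : ZMod p) + (b : ZMod p) + (c : ZMod p) + (d : ZMod p))) else 0) := by
  unfold Ssum
  refine Fintype.sum_equiv (Equiv.mulLeft l⁻¹) _ _ fun a => ?_
  refine Fintype.sum_equiv (Equiv.mulLeft l⁻¹) _ _ fun b => ?_
  refine Fintype.sum_equiv (Equiv.mulLeft l⁻¹) _ _ fun c => ?_
  refine Fintype.sum_equiv (Equiv.mulLeft l⁻¹) _ _ fun d => ?_
  have hl : ((l : ZMod p)) ≠ 0 := l.ne_zero
  have hval : ∀ x : (ZMod p)ˣ, ((l⁻¹ * x : (ZMod p)ˣ) : ZMod p) = ((l:ZMod p))⁻¹ * x := by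
    intro x; rw [Units.val_mul, Units.val_inv_eq_inv_val]
  have hinv : ∀ x : (ZMod p)ˣ, (((l⁻¹ * x : (ZMod p)ˣ) : ZMod p))⁻¹ = (l : ZMod p) * ((x:ZMod p))⁻¹ := by
    intro x; rw [hval, mul_inv, inv_inv]
  rw [show ((Equiv.mulLeft l⁻¹) a) = l⁻¹ * a from rfl, show ((Equiv.mulLeft l⁻¹) b) = l⁻¹ * b from rfl,
    show ((Equiv.mulLeft l⁻¹) c) = l⁻¹ * c from rfl, show ((Equiv.mulLeft l⁻¹) d) = l⁻¹ * d from rfl]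
  rw [hinv a, hinv b, hinv c, hinv d, hval a, hval b, hval c, hval d]
  have hcond : ((l:ZMod p) * ((a:ZMod p))⁻¹ + (l:ZMod p) * ((b:ZMod p))⁻¹ +
      (l:ZMod p) * ((c:ZMod p))⁻¹ + (l:ZMod p) * ((d:ZMod p))⁻¹ = 0)
      ↔ (((a:ZMod p))⁻¹ + ((b:ZMod p))⁻¹ + ((c:ZMod p))⁻¹ + ((d:ZMod p))⁻¹ = 0) := by
    constructor
    · intro h
      have h2 : (l:ZMod p) * (((a:ZMod p))⁻¹ + ((b:ZMod p))⁻¹ + ((c:ZMod p))⁻¹ + ((d:ZMod p))⁻¹) = 0 := by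
        linear_combination h
      rcases mul_eq_zero.1 h2 with h3 | h3
      · exact absurd h3 hl
      · exact h3
    · intro h
      linear_combination (l : ZMod p) * h
  have hL : (l:ZMod p) * (((l:ZMod p))⁻¹ * (a:ZMod p) + ((l:ZMod p))⁻¹ * (b:ZMod p) +
      ((l:ZMod p))⁻¹ * (c:ZMod p) + ((l:ZMod p))⁻¹ * (d:ZMod p))
      = (a:ZMod p) + (b:ZMod p) + (c:ZMod p) + (d:ZMod p) := by
    linear_combination ((a:ZMod p) + (b:ZMod p) + (c:ZMod p) + (d:ZMod p)) * mul_inv_cancel₀ hl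
  simp only [hcond, hL]

lemma scaled_sum :
    ((p:ℂ) - 1) * Ssum p =
      (p:ℂ) * (∑ a : (ZMod p)ˣ, ∑ b : (ZMod p)ˣ, ∑ c : (ZMod p)ˣ, ∑ d : (ZMod p)ˣ,
        (if ((a : ZMod p) + b + c + d = 0 ∧
            ((a:ZMod p))⁻¹ + ((b:ZMod p))⁻¹ + ((c:ZMod p))⁻¹ + ((d:ZMod p))⁻¹ = 0)
          then (1:ℂ) else 0))
      - (∑ a : (ZMod p)ˣ, ∑ b : (ZMod p)ˣ, ∑ c : (ZMod p)ˣ, ∑ d : (ZMod p)ˣ,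
        (if ((a:ZMod p))⁻¹ + ((b:ZMod p))⁻¹ + ((c:ZMod p))⁻¹ + ((d:ZMod p))⁻¹ = 0
          then (1:ℂ) else 0)) := by
  have h0 : ((p:ℂ) - 1) * Ssum p = ∑ _l : (ZMod p)ˣ, Ssum p := (card_G _).symm
  rw [h0]
  calc ∑ l : (ZMod p)ˣ, Ssum p
      = ∑ l : (ZMod p)ˣ, ∑ a : (ZMod p)ˣ, ∑ b : (ZMod p)ˣ, ∑ c : (ZMod p)ˣ, ∑ d : (ZMod p)ˣ,
        (if ((a:ZMod p))⁻¹ + ((b:ZMod p))⁻¹ + ((c:ZMod p))⁻¹ + ((d:ZMod p))⁻¹ = 0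
          then ZMod.stdAddChar ((l : ZMod p) *
            ((a : ZMod p) + (b : ZMod p) + (c : ZMod p) + (d : ZMod p))) else 0) :=
        Finset.sum_congr rfl fun l _ => S_scale l
    _ = ∑ a : (ZMod p)ˣ, ∑ b : (ZMod p)ˣ, ∑ c : (ZMod p)ˣ, ∑ d : (ZMod p)ˣ, ∑ l : (ZMod p)ˣ,
        (if ((a:ZMod p))⁻¹ + ((b:ZMod p))⁻¹ + ((c:ZMod p))⁻¹ + ((d:ZMod p))⁻¹ = 0
          then ZMod.stdAddChar ((l : ZMod p) *
            ((a : ZMod p) + (b : ZMod p) + (c : ZMod p) + (d : ZMod p))) else 0) := by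
        rw [Finset.sum_comm]
        refine Finset.sum_congr rfl fun a _ => ?_
        rw [Finset.sum_comm]
        refine Finset.sum_congr rfl fun b _ => ?_
        rw [Finset.sum_comm]
        refine Finset.sum_congr rfl fun c _ => ?_
        rw [Finset.sum_comm]
    _ = _ := by
        have inner : ∀ a b c d : (ZMod p)ˣ,
            (∑ l : (ZMod p)ˣ,
              (if ((a:ZMod p))⁻¹ + ((b:ZMod p))⁻¹ + ((c:ZMod p))⁻¹ + ((d:ZMod p))⁻¹ = 0
                then ZMod.stdAddChar ((l : ZMod p) *
                  ((a : ZMod p) + (b : ZMod p) + (c : ZMod p) + (d : ZMod p))) else 0))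
            = (p:ℂ) * (if ((a : ZMod p) + b + c + d = 0 ∧
                ((a:ZMod p))⁻¹ + ((b:ZMod p))⁻¹ + ((c:ZMod p))⁻¹ + ((d:ZMod p))⁻¹ = 0)
                then (1:ℂ) else 0)
              - (if ((a:ZMod p))⁻¹ + ((b:ZMod p))⁻¹ + ((c:ZMod p))⁻¹ + ((d:ZMod p))⁻¹ = 0
                then (1:ℂ) else 0) := by
          intro a b c d
          rw [ite_sum_const]
          have horth : ∑ l : (ZMod p)ˣ, ZMod.stdAddChar ((l : ZMod p) *
              ((a : ZMod p) + (b : ZMod p) + (c : ZMod p) + (d : ZMod p)))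
              = (if (a : ZMod p) + b + c + d = 0 then (p:ℂ) else 0) - 1 := by
            rw [sum_units_eq (fun z => ZMod.stdAddChar (z *
              ((a : ZMod p) + (b : ZMod p) + (c : ZMod p) + (d : ZMod p)))),
              Finset.sum_erase_eq_sub (Finset.mem_univ (0 : ZMod p)), sum_std]
            norm_num
          rw [horth]
          exact ite_alg _ _ _
        simp_rw [inner]
        simp only [Finset.sum_sub_distrib, ← Finset.mul_sum]

lemma countB :
    (∑ a : (ZMod p)ˣ, ∑ b : (ZMod p)ˣ, ∑ c : (ZMod p)ˣ, ∑ d : (ZMod p)ˣ,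
      (if ((a:ZMod p))⁻¹ + ((b:ZMod p))⁻¹ + ((c:ZMod p))⁻¹ + ((d:ZMod p))⁻¹ = 0
        then (1:ℂ) else 0))
    = ∑ a : (ZMod p)ˣ, ∑ b : (ZMod p)ˣ, ∑ c : (ZMod p)ˣ, ∑ d : (ZMod p)ˣ,
      (if (a : ZMod p) + b + c + d = 0 then (1:ℂ) else 0) := by
  refine Fintype.sum_equiv (Equiv.inv (ZMod p)ˣ) _ _ fun a => ?_
  refine Fintype.sum_equiv (Equiv.inv (ZMod p)ˣ) _ _ fun b => ?_
  refine Fintype.sum_equiv (Equiv.inv (ZMod p)ˣ) _ _ fun c => ?_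
  refine Fintype.sum_equiv (Equiv.inv (ZMod p)ˣ) _ _ fun d => ?_
  simp only [Equiv.inv_apply, Units.val_inv_eq_inv_val]

lemma icc_sum (f : ZMod p → ℂ) :
    ∑ u ∈ Finset.Icc 1 (p - 1), f ((u : ℕ) : ZMod p) =
      ∑ z ∈ Finset.univ.erase (0 : ZMod p), f z := by
  have hp2 : 2 ≤ p := hp.out.two_le
  refine Finset.sum_nbij' (fun u => ((u : ℕ) : ZMod p)) (fun z => z.val) ?_ ?_ ?_ ?_ ?_
  · intro u hu
    obtain ⟨h1, h2⟩ := Finset.mem_Icc.1 hu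
    refine Finset.mem_erase.2 ⟨?_, Finset.mem_univ _⟩
    intro h0
    have hdvd : p ∣ u := (ZMod.natCast_eq_zero_iff u p).1 h0
    have := Nat.le_of_dvd (by omega) hdvd
    omega
  · intro z hz
    have hz0 := (Finset.mem_erase.1 hz).1
    have hv : z.val ≠ 0 := fun h => hz0 (by rwa [ZMod.val_eq_zero] at h)
    have hlt := ZMod.val_lt z
    simp only [Finset.mem_Icc]
    omega
  · intro u hu
    obtain ⟨h1, h2⟩ := Finset.mem_Icc.1 hu
    exact ZMod.val_cast_of_lt (by omega)
  · intro z _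
    exact ZMod.natCast_zmod_val z
  · intro u _
    rfl

theorem fourth_moment (p : ℕ) [Fact p.Prime] (hodd : Odd p) :
    ∑ u ∈ Finset.Icc 1 (p - 1), (K p (u : ℤ)) ^ 4 =
      2 * (p : ℂ) ^ 3 - 3 * (p : ℂ) ^ 2 - 3 * p - 1 := by
  have hp1 : p.Prime := Fact.out
  have hK : ∀ u : ℕ, K p (u : ℤ) = KK p ((u : ℕ) : ZMod p) := fun u => by
    rw [K_eq_KK]; norm_cast
  calc ∑ u ∈ Finset.Icc 1 (p - 1), (K p (u : ℤ)) ^ 4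
      = ∑ u ∈ Finset.Icc 1 (p - 1), (KK p ((u : ℕ) : ZMod p)) ^ 4 :=
        Finset.sum_congr rfl fun u _ => by rw [hK]
    _ = ∑ z ∈ Finset.univ.erase (0 : ZMod p), (KK p z) ^ 4 := icc_sum (fun z => (KK p z) ^ 4)
    _ = (∑ z : ZMod p, (KK p z) ^ 4) - (KK p 0) ^ 4 :=
        Finset.sum_erase_eq_sub (Finset.mem_univ _)
    _ = (p : ℂ) * Ssum p - 1 := by rw [sum_KK4, KK_zero]; norm_num
    _ = 2 * (p : ℂ) ^ 3 - 3 * (p : ℂ) ^ 2 - 3 * p - 1 := by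
        have hq : ((p : ℂ) - 1) ≠ 0 :=
          sub_ne_zero.2 (fun h => hp1.ne_one (by exact_mod_cast h))
        have h1 : ((p : ℂ) - 1) * Ssum p =
            ((p : ℂ) - 1) * (2 * (p : ℂ) ^ 2 - 3 * (p : ℂ) - 3) := by
          rw [scaled_sum, countB, countA hodd, count4]; ring
        have hS := mul_left_cancel₀ hq h1
        rw [hS]; ring
end

section
/- Let p ≥ 5 be prime and k with 2 ≤ k ≤ p-1, k ≠ 9 (and k ≢ 1, 9 mod p). With f_1(x) = x^2 - 4x, f_k(x) = x^2 - 2(k+1)x + (k-1)^2, and g_k(x) = x(4k x^2 + (k^2-6k-3)x + 4), one has ∑_{x=0}^{p-1} (f_1(x) f_k(x)/p) = -1 + ∑_{x=0}^{p-1} (g_k(x)/p). -/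
open Finset

/-!
Inverting `x` turns the quartic `f₁ f_k`, which vanishes at `0`, into a cubic with constant
term `1`; an affine change of variables puts that cubic in the form `v (v² + a v + b)` with
`b = (k - 1)³ (k - 9)`. For such cubics the character sum is invariant under the 2-isogeny
`(a, b) ↦ (-2a, a² - 4b)`: writing `x (x² + a x + b) = x² (x + b/x + a)`, the number of `x ≠ 0`
with `x + b/x = t` is the number of `y` with `y² = t² - 4b`, namely `1 + χ(t² - 4b)`.
Here `a² - 4b = 256 k`, and rescaling the isogenous cubic gives `g_k`.
-/

section QuadraticCharSums

variable {F : Type*} [Field F] [Fintype F] [DecidableEq F]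

local notation "χ" => quadraticChar F

theorem quadraticChar_sq_mul {c : F} (hc : c ≠ 0) (t : F) : χ (c ^ 2 * t) = χ t := by
  rw [map_mul, quadraticChar_sq_one' hc, one_mul]

theorem sum_quadraticChar_eq_of_affine {f g : F → F} {a b c : F} (ha : a ≠ 0) (hc : c ≠ 0)
    (h : ∀ x, f (a * x + b) = c ^ 2 * g x) : ∑ x, χ (f x) = ∑ x, χ (g x) :=
  (Fintype.sum_bijective (fun x => a * x + b)
    ((AddGroup.addRight_bijective b).comp (mulLeft_bijective₀ a ha)) _ _
    fun x => by rw [h, quadraticChar_sq_mul hc]).symm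

theorem sum_quadraticChar_add_eq_of_inv {f g : F → F} (h : ∀ x ≠ 0, x ^ 4 * f x⁻¹ = g x) :
    ∑ x, χ (f x) + χ (g 0) = ∑ x, χ (g x) + χ (f 0) := by
  have hfg : ∀ x ≠ 0, χ (f x⁻¹) = χ (g x) := fun x hx => by
    rw [← h x hx, show x ^ 4 = (x ^ 2) ^ 2 by ring, quadraticChar_sq_mul (pow_ne_zero 2 hx)]
  rw [← Fintype.sum_bijective _ inv_involutive.bijective (fun x => χ (f x⁻¹)) _ fun _ => rfl,
    ← add_sum_erase _ _ (mem_univ 0), ← add_sum_erase _ _ (mem_univ 0),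
    sum_congr rfl fun x hx => hfg x (ne_of_mem_erase hx), inv_zero]
  abel

theorem sum_erase_zero_add_div_eq_sum_conic {M : Type*} [AddCommMonoid M] (h2 : (2 : F) ≠ 0)
    {B : F} (hB : B ≠ 0) (g : F → M) :
    ∑ x ∈ univ.erase 0, g (x + B / x) =
      ∑ q ∈ univ.filter (fun q : F × F => q.2 ^ 2 = q.1 ^ 2 - 4 * B), g q.1 := by
  have conic_fst_add_snd : ∀ q : F × F, q.2 ^ 2 = q.1 ^ 2 - 4 * B →
      (q.1 + q.2) / 2 * ((q.1 - q.2) / 2) = B := fun q hq => by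
    field_simp; linear_combination -hq
  refine sum_nbij' (fun x => (x + B / x, x - B / x)) (fun q => (q.1 + q.2) / 2) ?_ ?_ ?_ ?_ ?_
  · intro x hx
    have hx0 := ne_of_mem_erase hx
    simp only [mem_filter, mem_univ, true_and]
    field_simp; ring
  · intro q hq
    rw [mem_filter] at hq
    exact mem_erase.2 ⟨left_ne_zero_of_mul ((conic_fst_add_snd q hq.2).trans_ne hB), mem_univ _⟩
  · intro x hx
    have hx0 := ne_of_mem_erase hx
    field_simp; ring
  · intro q hq
    rw [mem_filter] at hq
    have hs := left_ne_zero_of_mul ((conic_fst_add_snd q hq.2).trans_ne hB)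
    have hd : B / ((q.1 + q.2) / 2) = (q.1 - q.2) / 2 := by
      rw [div_eq_iff hs, ← conic_fst_add_snd q hq.2, mul_comm]
    ext <;> simp only [hd] <;> field_simp <;> ring
  · intro _ _; rfl


theorem sum_filter_snd_sq_eq_sum_quadraticChar (hF : ringChar F ≠ 2) (h : F → F) (g : F → ℤ) :
    ∑ q ∈ univ.filter (fun q : F × F => q.2 ^ 2 = h q.1), g q.1 = ∑ t, (χ (h t) + 1) * g t := by
  rw [sum_filter, Fintype.sum_prod_type]
  refine sum_congr rfl fun t _ => ?_
  dsimp only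
  rw [← sum_filter, sum_const, nsmul_eq_mul, ← quadraticChar_card_sqrts hF, Set.toFinset_ofPred]

theorem sum_quadraticChar_cubic_eq_isogenous (hF : ringChar F ≠ 2) (A : F) {B : F} (hB : B ≠ 0) :
    ∑ x, χ (x * (x ^ 2 + A * x + B)) = ∑ x, χ (x * (x ^ 2 - 2 * A * x + (A ^ 2 - 4 * B))) :=
  calc ∑ x, χ (x * (x ^ 2 + A * x + B))
      = ∑ x ∈ univ.erase 0, χ (x + B / x + A) := by
        rw [← sum_erase (f := fun x => χ (x * (x ^ 2 + A * x + B))) univ (a := 0) (by simp)]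
        refine sum_congr rfl fun x hx => ?_
        have hx0 := ne_of_mem_erase hx
        rw [← quadraticChar_sq_mul hx0 (x + B / x + A)]
        congr 1
        field_simp
        ring
    _ = ∑ t, (χ (t ^ 2 - 4 * B) + 1) * χ (t + A) := by
        rw [sum_erase_zero_add_div_eq_sum_conic (Ring.two_ne_zero hF) hB fun t => χ (t + A),
          sum_filter_snd_sq_eq_sum_quadraticChar hF (fun t => t ^ 2 - 4 * B) fun t => χ (t + A)]
    _ = ∑ t, χ ((t ^ 2 - 4 * B) * (t + A)) + ∑ t, χ (t + A) := by
        simp only [add_mul, one_mul, map_mul, sum_add_distrib]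
    _ = ∑ t, χ ((t ^ 2 - 4 * B) * (t + A)) := by
        have hshift : ∑ t, χ (t + A) = 0 :=
          (Fintype.sum_equiv (Equiv.addRight A) _ _ fun _ => rfl).trans (quadraticChar_sum_zero hF)
        rw [hshift, add_zero]
    _ = ∑ x, χ (x * (x ^ 2 - 2 * A * x + (A ^ 2 - 4 * B))) :=
        (sum_quadraticChar_eq_of_affine (a := 1) (b := A) one_ne_zero one_ne_zero
          fun t => by ring).symm

section Reduction

variable (K : F)

theorem sum_quadraticChar_quartic_eq_neg_one_add_reversed :
    ∑ x, χ ((x ^ 2 - 4 * x) * (x ^ 2 - 2 * (K + 1) * x + (K - 1) ^ 2)) =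
      -1 + ∑ u, χ ((1 - 4 * u) * ((K - 1) ^ 2 * u ^ 2 - 2 * (K + 1) * u + 1)) := by
  have hinv := sum_quadraticChar_add_eq_of_inv
    (f := fun x => (x ^ 2 - 4 * x) * (x ^ 2 - 2 * (K + 1) * x + (K - 1) ^ 2))
    (g := fun u => (1 - 4 * u) * ((K - 1) ^ 2 * u ^ 2 - 2 * (K + 1) * u + 1))
    fun x hx => by field_simp; ring
  simp only [mul_zero, sub_zero, zero_pow two_ne_zero, zero_mul, zero_add, mul_one, map_one,
    quadraticChar_zero] at hinv
  linarith

variable {K}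

theorem sum_quadraticChar_reversed_eq_weierstrass (h2 : (2 : F) ≠ 0) (hK1 : K ≠ 1) :
    ∑ u, χ ((1 - 4 * u) * ((K - 1) ^ 2 * u ^ 2 - 2 * (K + 1) * u + 1)) =
      ∑ v, χ (v * (v ^ 2 + 2 * (3 + 6 * K - K ^ 2) * v + (K - 1) ^ 3 * (K - 9))) := by
  have h4 : (4 : F) ≠ 0 := by rw [show (4 : F) = 2 ^ 2 by norm_num]; exact pow_ne_zero 2 h2
  have hc : 4 * (K - 1) ^ 2 ≠ 0 := mul_ne_zero h4 (pow_ne_zero 2 (sub_ne_zero.2 hK1))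
  exact (sum_quadraticChar_eq_of_affine (a := -(4 * (K - 1) ^ 2)) (b := (K - 1) ^ 2)
    (neg_ne_zero.2 hc) hc fun u => by ring).symm

theorem sum_quadraticChar_weierstrass_eq_gk (hF : ringChar F ≠ 2) (hK0 : K ≠ 0) (hK1 : K ≠ 1)
    (hK9 : K ≠ 9) :
    ∑ v, χ (v * (v ^ 2 + 2 * (3 + 6 * K - K ^ 2) * v + (K - 1) ^ 3 * (K - 9))) =
      ∑ x, χ (x * (4 * K * x ^ 2 + (K ^ 2 - 6 * K - 3) * x + 4)) := by
  have h2 : (2 : F) ≠ 0 := Ring.two_ne_zero hF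
  have h16 : (16 : F) ≠ 0 := by rw [show (16 : F) = 2 ^ 4 by norm_num]; exact pow_ne_zero 4 h2
  have h32 : (32 : F) ≠ 0 := by rw [show (32 : F) = 2 ^ 5 by norm_num]; exact pow_ne_zero 5 h2
  have hD : (K - 1) ^ 3 * (K - 9) ≠ 0 :=
    mul_ne_zero (pow_ne_zero 3 (sub_ne_zero.2 hK1)) (sub_ne_zero.2 hK9)
  rw [sum_quadraticChar_cubic_eq_isogenous hF _ hD]
  exact sum_quadraticChar_eq_of_affine (a := 16 * K) (b := 0) (c := 32 * K)
    (mul_ne_zero h16 hK0) (mul_ne_zero h32 hK0) fun x => by ring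

end Reduction

end QuadraticCharSums

theorem ZMod.sum_range_natCast {M : Type*} [AddCommMonoid M] {n : ℕ} [NeZero n]
    (f : ZMod n → M) : ∑ x ∈ range n, f x = ∑ x : ZMod n, f x :=
  sum_nbij' (↑) ZMod.val (by simp) (by simp [ZMod.val_lt])
    (fun _ ha => ZMod.val_cast_of_lt (mem_range.1 ha)) (fun b _ => ZMod.natCast_zmod_val b)
    (fun _ _ => rfl)

theorem eps_eq_gk_sum (p : ℕ) [Fact p.Prime] (hp : 5 ≤ p) (k : ℤ)
    (hk : 2 ≤ k ∧ k ≤ (p : ℤ) - 1)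
    (hk1 : (k : ZMod p) ≠ 1) (hk9 : (k : ZMod p) ≠ 9) :
    ∑ x ∈ Finset.range p,
      legendreSym p (((x : ℤ) ^ 2 - 4 * x) *
        ((x : ℤ) ^ 2 - 2 * (k + 1) * x + (k - 1) ^ 2)) =
    -1 + ∑ x ∈ Finset.range p,
      legendreSym p ((x : ℤ) * (4 * k * x ^ 2 + (k ^ 2 - 6 * k - 3) * x + 4)) := by
  have hF : ringChar (ZMod p) ≠ 2 := by rw [ZMod.ringChar_zmod_n]; omega
  have hk0 : (k : ZMod p) ≠ 0 := by
    rw [Ne, ZMod.intCast_zmod_eq_zero_iff_dvd]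
    exact fun h => absurd (Int.le_of_dvd (by omega) h) (by omega)
  have hlhs : ∑ x ∈ range p, legendreSym p (((x : ℤ) ^ 2 - 4 * x) *
      ((x : ℤ) ^ 2 - 2 * (k + 1) * x + (k - 1) ^ 2)) =
      ∑ x : ZMod p, quadraticChar (ZMod p)
        ((x ^ 2 - 4 * x) * (x ^ 2 - 2 * (k + 1) * x + (k - 1) ^ 2)) := by
    rw [← ZMod.sum_range_natCast]
    push_cast [legendreSym]
    rfl
  have hrhs : ∑ x ∈ range p,
      legendreSym p ((x : ℤ) * (4 * k * x ^ 2 + (k ^ 2 - 6 * k - 3) * x + 4)) =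
      ∑ x : ZMod p, quadraticChar (ZMod p) (x * (4 * k * x ^ 2 + (k ^ 2 - 6 * k - 3) * x + 4)) := by
    rw [← ZMod.sum_range_natCast]
    push_cast [legendreSym]
    rfl
  rw [hlhs, hrhs, sum_quadraticChar_quartic_eq_neg_one_add_reversed,
    sum_quadraticChar_reversed_eq_weierstrass (Ring.two_ne_zero hF) hk1,
    sum_quadraticChar_weierstrass_eq_gk hF hk0 hk1 hk9]
end
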